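/- arXiv:1808.08210 — 2 statements merged into one kernel-verified Lean document; each statement's English description precedes it below -/
import Mathlib

section
/- A point v* = (v1*,...,vN*) satisfies the MACE equilibrium conditions F_i(x* + u_i*) = x* for all i and ∑ u_i* = 0 (with v_i* = x* + u_i*, x* = (1/N)∑ v_i*) if and only if v* is a fixed point of (2G - I)(2F - I), where F is the stacked operator and G the averaging operator. -/
/-! Put `w = 2 F v - v`. The reflection `2 G - I` sends `w` back to `v` exactly when `G w = F v`.
As `G w` is the constant `c = 2 · mean (F v) - x*`, this says that every `F_i (v_i)` equals `c`;
averaging these equations gives `mean (F v) = c`, hence `c = x*`. -/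

open Finset
open scoped BigOperators

theorem two_nsmul_sub_sub_eq_iff {M : Type*} [AddCommGroup M] [IsAddTorsionFree M] (g f v : M) :
    2 • g - (2 • f - v) = v ↔ g = f := by
  rw [sub_eq_iff_eq_add, add_sub_cancel, nsmul_right_inj two_ne_zero]

theorem Fintype.expect_eq_one_div_card_smul_sum {ι 𝕜 E : Type*} [Fintype ι] [DivisionSemiring 𝕜]
    [CharZero 𝕜] [AddCommMonoid E] [Module 𝕜 E] [Module ℚ≥0 E] (v : ι → E) :
    𝔼 i, v i = (1 / (Fintype.card ι : 𝕜)) • ∑ i, v i := by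
  rw [Finset.expect, one_div, ← NNRat.cast_smul_eq_nnqsmul 𝕜, NNRat.cast_inv, NNRat.cast_natCast,
    card_univ]

section

variable {ι M : Type*} [Fintype ι] [AddCommGroup M] [Module ℚ≥0 M]

theorem expect_two_nsmul_sub_of_forall_eq [Nonempty ι] {f : ι → M} {c : M} (hf : ∀ i, f i = c)
    (v : ι → M) : 𝔼 i, (2 • f i - v i) = 2 • c - 𝔼 i, v i := by
  simp only [hf, expect_sub_distrib, Fintype.expect_const]

theorem forall_eq_expect_two_nsmul_sub_iff (f v : ι → M) :
    (∀ i, f i = 𝔼 j, (2 • f j - v j)) ↔ ∀ i, f i = 𝔼 j, v j := by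
  cases isEmpty_or_nonempty ι
  · simp only [IsEmpty.forall_iff]
  constructor
  · intro hf i
    have h := expect_two_nsmul_sub_of_forall_eq hf v
    rw [two_nsmul, add_sub_assoc, left_eq_add, sub_eq_zero] at h
    rw [hf i, h]
  · intro hf i
    rw [expect_two_nsmul_sub_of_forall_eq hf v, hf i, two_nsmul, add_sub_cancel_right]

end

theorem mace_equilibrium_iff_fixed_point_general
    (n N : ℕ)
    (Fi : Fin N → (EuclideanSpace ℝ (Fin n) → EuclideanSpace ℝ (Fin n)))
    (F G : (Fin N → EuclideanSpace ℝ (Fin n)) → (Fin N → EuclideanSpace ℝ (Fin n)))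
    (hF : ∀ z, F z = fun i => Fi i (z i))
    (hG : ∀ z, G z = fun _ => (1 / (N : ℝ)) • ∑ i, z i)
    (v : Fin N → EuclideanSpace ℝ (Fin n))
    (xstar : EuclideanSpace ℝ (Fin n))
    (hx : xstar = (1 / (N : ℝ)) • ∑ i, v i) :
    (∀ i, Fi i (v i) = xstar) ↔ 2 • G (2 • F v - v) - (2 • F v - v) = v := by
  have : IsAddTorsionFree (Fin N → EuclideanSpace ℝ (Fin n)) := .of_module_nnrat _
  have mean_eq_expect (z : Fin N → EuclideanSpace ℝ (Fin n)) :
      (1 / (N : ℝ)) • ∑ i, z i = 𝔼 i, z i := by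
    rw [Fintype.expect_eq_one_div_card_smul_sum (𝕜 := ℝ), Fintype.card_fin]
  rw [two_nsmul_sub_sub_eq_iff, hG, hF, hx, mean_eq_expect, mean_eq_expect, funext_iff,
    ← forall_eq_expect_two_nsmul_sub_iff]
  simp only [Pi.sub_apply, Pi.smul_apply, eq_comm]

theorem mace_equilibrium_iff_fixed_point
    (n N : ℕ) (hN : 0 < N)
    (Fi : Fin N → (EuclideanSpace ℝ (Fin n) → EuclideanSpace ℝ (Fin n)))
    (F G : (Fin N → EuclideanSpace ℝ (Fin n)) → (Fin N → EuclideanSpace ℝ (Fin n)))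
    (hF : ∀ z, F z = fun i => Fi i (z i))
    (hG : ∀ z, G z = fun _ => (1 / (N : ℝ)) • ∑ i, z i)
    (v : Fin N → EuclideanSpace ℝ (Fin n))
    (xstar : EuclideanSpace ℝ (Fin n))
    (hx : xstar = (1 / (N : ℝ)) • ∑ i, v i) :
    (∀ i, Fi i (v i) = xstar) ↔ 2 • G (2 • F v - v) - (2 • F v - v) = v :=
  mace_equilibrium_iff_fixed_point_general n N Fi F G hF hG v xstar hx
end

section
/- The dual-layer matting energy J̃(α) := min over coefficients (a, b) of ∑_j [∑_{i ∈ w_j} (α_i - ∑_c a_j^c I_i^c - b_j)² + η ∑_{i ∈ w_j} (−∑_c a_j^c P_i^c − b_j)² + ε ∑_c (a_j^c)²] satisfies J̃(α) > 0 for every nonzero α ∈ ℝⁿ; hence the matrix L̃ with J̃(α) = αᵀ L̃ α is positive definite. -/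
set_option maxHeartbeats 1000000

open Finset

theorem dual_layer_matting_energy_positive
    (n m : ℕ) (η ε : ℝ) (hη : 0 < η) (hε : 0 < ε)
    (I P : Fin n → Fin 3 → ℝ)
    (w : Fin m → Finset (Fin n))
    (hcover : ∀ i : Fin n, ∃ j : Fin m, i ∈ w j)
    (J : (Fin n → ℝ) → (Fin m → Fin 3 → ℝ) → (Fin m → ℝ) → ℝ)
    (hJ : ∀ α a b, J α a b =
      ∑ j : Fin m,
        ((∑ i ∈ w j, (α i - (∑ c : Fin 3, a j c * I i c) - b j) ^ 2) +
         η * (∑ i ∈ w j, (-(∑ c : Fin 3, a j c * P i c) - b j) ^ 2) +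
         ε * ∑ c : Fin 3, (a j c) ^ 2)) :
    ∀ α : Fin n → ℝ, α ≠ 0 →
      0 < ⨅ p : (Fin m → Fin 3 → ℝ) × (Fin m → ℝ), J α p.1 p.2 := by
  intro α hα
  obtain ⟨i, hi⟩ : ∃ i, α i ≠ 0 := by
    by_contra h
    push_neg at h
    exact hα (funext h)
  obtain ⟨j, hj⟩ := hcover i
  set Q : ℝ := (∑ c : Fin 3, I i c ^ 2) + (∑ c : Fin 3, P i c ^ 2) + 1 with hQdef
  have hIQ : (∑ c : Fin 3, I i c ^ 2) ≤ Q := by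
    have h1 : (0:ℝ) ≤ ∑ c : Fin 3, P i c ^ 2 := Finset.sum_nonneg fun _ _ => sq_nonneg _
    simp only [hQdef]; linarith
  have hPQ : (∑ c : Fin 3, P i c ^ 2) ≤ Q := by
    have h1 : (0:ℝ) ≤ ∑ c : Fin 3, I i c ^ 2 := Finset.sum_nonneg fun _ _ => sq_nonneg _
    simp only [hQdef]; linarith
  have hQpos : 0 < Q := by
    have h1 : (0:ℝ) ≤ ∑ c : Fin 3, I i c ^ 2 := Finset.sum_nonneg fun _ _ => sq_nonneg _
    have h2 : (0:ℝ) ≤ ∑ c : Fin 3, P i c ^ 2 := Finset.sum_nonneg fun _ _ => sq_nonneg _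
    simp only [hQdef]; linarith
  set c : ℝ := min 1 (min η (ε / (8 * Q))) with hcdef
  have hcpos : 0 < c := lt_min one_pos (lt_min hη (by positivity))
  have hc1 : c ≤ 1 := min_le_left _ _
  have hc2 : c ≤ η := le_trans (min_le_right _ _) (min_le_left _ _)
  have hc3 : c * (8 * Q) ≤ ε := by
    have h : c ≤ ε / (8 * Q) :=
      le_trans (min_le_right 1 (min η (ε / (8 * Q)))) (min_le_right η (ε / (8 * Q)))
    calc c * (8 * Q) ≤ ε / (8 * Q) * (8 * Q) := by
          apply mul_le_mul_of_nonneg_right h (by positivity)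
      _ = ε := by field_simp
  have hkey : ∀ (a : Fin m → Fin 3 → ℝ) (b : Fin m → ℝ), c / 4 * α i ^ 2 ≤ J α a b := by
    intro a b
    rw [hJ]
    set s : ℝ := ∑ c : Fin 3, a j c * I i c with hsdef
    set t : ℝ := ∑ c : Fin 3, a j c * P i c with htdef
    set N : ℝ := ∑ c : Fin 3, a j c ^ 2 with hNdef
    have hN : 0 ≤ N := Finset.sum_nonneg fun _ _ => sq_nonneg _
    -- Cauchy-Schwarz bounds
    have hs : s ^ 2 ≤ N * Q := by
      have cs : s ^ 2 ≤ N * (∑ c : Fin 3, I i c ^ 2) := by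
        simp only [hsdef, hNdef, Fin.sum_univ_three]
        nlinarith [sq_nonneg (a j 0 * I i 1 - a j 1 * I i 0),
          sq_nonneg (a j 0 * I i 2 - a j 2 * I i 0),
          sq_nonneg (a j 1 * I i 2 - a j 2 * I i 1)]
      calc s ^ 2 ≤ N * (∑ c : Fin 3, I i c ^ 2) := cs
        _ ≤ N * Q := mul_le_mul_of_nonneg_left hIQ hN
    have ht : t ^ 2 ≤ N * Q := by
      have cs : t ^ 2 ≤ N * (∑ c : Fin 3, P i c ^ 2) := by
        simp only [htdef, hNdef, Fin.sum_univ_three]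
        nlinarith [sq_nonneg (a j 0 * P i 1 - a j 1 * P i 0),
          sq_nonneg (a j 0 * P i 2 - a j 2 * P i 0),
          sq_nonneg (a j 1 * P i 2 - a j 2 * P i 1)]
      calc t ^ 2 ≤ N * (∑ c : Fin 3, P i c ^ 2) := cs
        _ ≤ N * Q := mul_le_mul_of_nonneg_left hPQ hN
    set x : ℝ := α i - s - b j with hxdef
    set y : ℝ := -t - b j with hydef
    -- pointwise lower bound for the j-th term
    have hstep1 : c / 4 * α i ^ 2 ≤ x ^ 2 + η * y ^ 2 + ε * N := by
      have hαeq : α i = x - y + s - t := by simp only [hxdef, hydef]; ring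
      have h4 : α i ^ 2 ≤ 4 * (x ^ 2 + y ^ 2 + s ^ 2 + t ^ 2) := by
        rw [hαeq]
        nlinarith [sq_nonneg (x + y), sq_nonneg (x - s), sq_nonneg (x + t),
          sq_nonneg (y + s), sq_nonneg (y - t), sq_nonneg (s + t)]
      have p1 : c / 4 * α i ^ 2 ≤ c * (x ^ 2 + y ^ 2 + s ^ 2 + t ^ 2) := by
        have := mul_le_mul_of_nonneg_left h4 (by positivity : (0:ℝ) ≤ c / 4)
        linarith
      have p2 : c * s ^ 2 ≤ c * (N * Q) := mul_le_mul_of_nonneg_left hs hcpos.le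
      have p3 : c * t ^ 2 ≤ c * (N * Q) := mul_le_mul_of_nonneg_left ht hcpos.le
      have p4 : c * x ^ 2 ≤ x ^ 2 := by nlinarith [mul_le_mul_of_nonneg_right hc1 (sq_nonneg x)]
      have p5 : c * y ^ 2 ≤ η * y ^ 2 := mul_le_mul_of_nonneg_right hc2 (sq_nonneg y)
      have p6 : c * (N * Q) + c * (N * Q) ≤ ε * N := by
        nlinarith [mul_le_mul_of_nonneg_right hc3 hN,
          mul_nonneg (mul_nonneg hcpos.le hQpos.le) hN]
      calc c / 4 * α i ^ 2 ≤ c * (x ^ 2 + y ^ 2 + s ^ 2 + t ^ 2) := p1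
        _ = c * x ^ 2 + c * y ^ 2 + c * s ^ 2 + c * t ^ 2 := by ring
        _ ≤ x ^ 2 + η * y ^ 2 + (c * (N * Q) + c * (N * Q)) := by linarith
        _ ≤ x ^ 2 + η * y ^ 2 + ε * N := by linarith
    -- the j-th term dominates x² + η y² + ε N
    have hx : x ^ 2 ≤ ∑ i' ∈ w j, (α i' - (∑ c : Fin 3, a j c * I i' c) - b j) ^ 2 := by
      have := Finset.single_le_sum
        (f := fun i' => (α i' - (∑ c : Fin 3, a j c * I i' c) - b j) ^ 2)
        (fun i' _ => sq_nonneg _) hj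
      simpa [hxdef, hsdef] using this
    have hy : y ^ 2 ≤ ∑ i' ∈ w j, (-(∑ c : Fin 3, a j c * P i' c) - b j) ^ 2 := by
      have := Finset.single_le_sum
        (f := fun i' => (-(∑ c : Fin 3, a j c * P i' c) - b j) ^ 2)
        (fun i' _ => sq_nonneg _) hj
      simpa [hydef, htdef] using this
    have hterm : x ^ 2 + η * y ^ 2 + ε * N ≤
        (∑ i' ∈ w j, (α i' - (∑ c : Fin 3, a j c * I i' c) - b j) ^ 2) +
        η * (∑ i' ∈ w j, (-(∑ c : Fin 3, a j c * P i' c) - b j) ^ 2) +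
        ε * ∑ c : Fin 3, (a j c) ^ 2 := by
      have := mul_le_mul_of_nonneg_left hy hη.le
      simp only [← hNdef]
      linarith
    have hsum : ((∑ i' ∈ w j, (α i' - (∑ c : Fin 3, a j c * I i' c) - b j) ^ 2) +
        η * (∑ i' ∈ w j, (-(∑ c : Fin 3, a j c * P i' c) - b j) ^ 2) +
        ε * ∑ c : Fin 3, (a j c) ^ 2) ≤
        ∑ j' : Fin m,
          ((∑ i' ∈ w j', (α i' - (∑ c : Fin 3, a j' c * I i' c) - b j') ^ 2) +
           η * (∑ i' ∈ w j', (-(∑ c : Fin 3, a j' c * P i' c) - b j') ^ 2) +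
           ε * ∑ c : Fin 3, (a j' c) ^ 2) := by
      apply Finset.single_le_sum (f := fun j' =>
        (∑ i' ∈ w j', (α i' - (∑ c : Fin 3, a j' c * I i' c) - b j') ^ 2) +
        η * (∑ i' ∈ w j', (-(∑ c : Fin 3, a j' c * P i' c) - b j') ^ 2) +
        ε * ∑ c : Fin 3, (a j' c) ^ 2)
      · intro j' _
        have h1 : (0:ℝ) ≤ ∑ i' ∈ w j', (α i' - (∑ c : Fin 3, a j' c * I i' c) - b j') ^ 2 :=
          Finset.sum_nonneg fun _ _ => sq_nonneg _
        have h2 : (0:ℝ) ≤ ∑ i' ∈ w j', (-(∑ c : Fin 3, a j' c * P i' c) - b j') ^ 2 :=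
          Finset.sum_nonneg fun _ _ => sq_nonneg _
        have h3 : (0:ℝ) ≤ ∑ c : Fin 3, (a j' c) ^ 2 :=
          Finset.sum_nonneg fun _ _ => sq_nonneg _
        have := mul_nonneg hη.le h2
        have := mul_nonneg hε.le h3
        linarith
      · exact Finset.mem_univ j
    exact le_trans hstep1 (le_trans hterm hsum)
  have hpos : 0 < c / 4 * α i ^ 2 := by positivity
  exact lt_of_lt_of_le hpos (le_ciInf fun p => hkey p.1 p.2)
end
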